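/- arXiv:1105.5755 — 3 statements merged into one kernel-verified Lean document; each statement's English description precedes it below -/
import Mathlib

section
/- For a memoryless communication system with zero lookahead (d = 0): the infimum over all sequences of causal encoder maps f_{e,i} : 𝒰^i × 𝒴^{i−1} → 𝒳 and decoder maps f_{d,i} : 𝒴^i → 𝒰̂ of the limsup expected average distortion (1/N)Σ_{i=1}^N E[Λ(U_i, Û_i)] equals D_symbol := min over single-letter maps X : 𝒰 → 𝒳 and Û : 𝒴 → 𝒰̂ of E[Λ(U, Û(Y))], where Y is the channel output for input X(U). -/
/-!
Conditionally on the past `(u_{<N}, y_{<N})`, a causal scheme with zero lookahead acts at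
time `N` through the single-letter maps `a ↦ enc_N(u_{<N} a, y_{<N})` and
`b ↦ dec_N(y_{<N} b)`, while the new source letter and channel output are distributed as
`P_U(a) P_{Y|X}(b | x)`. So the expected distortion at time `N` is an average of single-letter
distortions, hence at least `D_symbol`; the memoryless scheme built from an optimal pair of
single-letter maps attains `D_symbol` at every time.
-/

open Filter

/-- Extend a finite sequence to an infinite one (arbitrary values beyond the horizon). -/
noncomputable def extSeq {α : Type*} [Nonempty α] {n : ℕ} (u : Fin n → α) : ℕ → α :=
  fun j => if h : j < n then u ⟨j, h⟩ else Classical.arbitrary α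

open Finset

lemma extSeq_of_lt {α : Type*} [Nonempty α] {n : ℕ} (u : Fin n → α) {j : ℕ} (h : j < n) :
    extSeq u j = u ⟨j, h⟩ := dif_pos h

lemma extSeq_snoc_of_lt {α : Type*} [Nonempty α] {n : ℕ} (u : Fin n → α) (a : α) {j : ℕ}
    (h : j < n) : extSeq (Fin.snoc u a : Fin (n + 1) → α) j = extSeq u j := by
  rw [extSeq_of_lt _ (h.trans n.lt_succ_self), extSeq_of_lt _ h]
  exact Fin.snoc_castSucc (α := fun _ => α) a u ⟨j, h⟩

lemma extSeq_snoc_last {α : Type*} [Nonempty α] {n : ℕ} (u : Fin n → α) (a : α) :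
    extSeq (Fin.snoc u a : Fin (n + 1) → α) n = a := by
  rw [extSeq_of_lt _ n.lt_succ_self]
  exact Fin.snoc_last (α := fun _ => α) a u

lemma Fin.sum_univ_snoc {α β : Type*} [Fintype α] [AddCommMonoid β] {n : ℕ}
    (g : (Fin (n + 1) → α) → β) :
    ∑ f, g f = ∑ a, ∑ f : Fin n → α, g (Fin.snoc f a) :=
  ((Fin.snocEquiv fun _ => α).sum_comp g).symm.trans (Fintype.sum_prod_type _)

lemma le_limsup_div_natCast {f : ℕ → ℝ} {a b : ℝ} (ha : ∀ N : ℕ, N * a ≤ f N)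
    (hb : ∀ N : ℕ, f N ≤ N * b) : a ≤ limsup (fun N : ℕ => f N / N) atTop := by
  have hpos : ∀ᶠ N : ℕ in atTop, (0 : ℝ) < N :=
    (eventually_gt_atTop 0).mono fun N hN => Nat.cast_pos.2 hN
  refine le_limsup_of_frequently_le ?_ ?_
  · exact (hpos.mono fun N hN => (le_div_iff₀ hN).2 (mul_comm a N ▸ ha N)).frequently
  · exact isBoundedUnder_of_eventually_le
      (hpos.mono fun N hN => (div_le_iff₀ hN).2 (mul_comm b N ▸ hb N))

lemma limsup_natCast_mul_div (d : ℝ) : limsup (fun N : ℕ => N * d / N) atTop = d := by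
  refine (limsup_congr ?_).trans (limsup_const d)
  filter_upwards [eventually_ne_atTop 0] with N hN
  field_simp

section SingleLetter

variable {U Xc Yc Uh : Type*} [Fintype U] [Fintype Yc]

def singleLetterDistortion (PU : U → ℝ) (chan : Yc → Xc → ℝ) (Λ : U → Uh → ℝ) (X : U → Xc)
    (V : Yc → Uh) : ℝ :=
  ∑ u, ∑ y, PU u * chan y (X u) * Λ u (V y)

variable {PU : U → ℝ} {chan : Yc → Xc → ℝ}

lemma sum_sum_mul_chan_eq_one (hPUs : ∑ u, PU u = 1) (hchs : ∀ x, ∑ y, chan y x = 1)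
    (X : U → Xc) : ∑ a, ∑ b, PU a * chan b (X a) = 1 := by
  simp only [← mul_sum, hchs, mul_one, hPUs]

lemma singleLetterDistortion_le (hPU0 : ∀ u, 0 ≤ PU u) (hPUs : ∑ u, PU u = 1)
    (hch0 : ∀ y x, 0 ≤ chan y x) (hchs : ∀ x, ∑ y, chan y x = 1) {Λ : U → Uh → ℝ} {Λmax : ℝ}
    (hΛmax : ∀ u v, Λ u v ≤ Λmax) (X : U → Xc) (V : Yc → Uh) :
    singleLetterDistortion PU chan Λ X V ≤ Λmax :=
  calc singleLetterDistortion PU chan Λ X V ≤ ∑ u, ∑ y, PU u * chan y (X u) * Λmax := by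
        unfold singleLetterDistortion
        gcongr with u _ y _
        · exact mul_nonneg (hPU0 u) (hch0 y _)
        · exact hΛmax u (V y)
    _ = Λmax := by simp only [← sum_mul, sum_sum_mul_chan_eq_one hPUs hchs, one_mul]

end SingleLetter

section Scheme

variable {U Xc Yc Uh : Type*}

def IsCausalEncoder (enc : ℕ → (ℕ → U) → (ℕ → Yc) → Xc) : Prop :=
  ∀ (i : ℕ) (u u' : ℕ → U) (y y' : ℕ → Yc),
    (∀ j ≤ i, u j = u' j) → (∀ j < i, y j = y' j) → enc i u y = enc i u' y'

def IsCausalDecoder (dec : ℕ → (ℕ → Yc) → Uh) : Prop :=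
  ∀ (i : ℕ) (y y' : ℕ → Yc), (∀ j ≤ i, y j = y' j) → dec i y = dec i y'

def memorylessEncoder (X : U → Xc) : ℕ → (ℕ → U) → (ℕ → Yc) → Xc := fun i u _ => X (u i)

def memorylessDecoder (V : Yc → Uh) : ℕ → (ℕ → Yc) → Uh := fun i y => V (y i)

lemma isCausalEncoder_memorylessEncoder (X : U → Xc) :
    IsCausalEncoder (memorylessEncoder X : ℕ → (ℕ → U) → (ℕ → Yc) → Xc) :=
  fun i _ _ _ _ hu _ => congrArg X (hu i le_rfl)

lemma isCausalDecoder_memorylessDecoder (V : Yc → Uh) : IsCausalDecoder (memorylessDecoder V) :=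
  fun i _ _ hy => congrArg V (hy i le_rfl)

lemma sum_distortion_snoc [Nonempty Yc] {Λ : U → Uh → ℝ} {dec : ℕ → (ℕ → Yc) → Uh}
    (hdec : IsCausalDecoder dec) {N : ℕ} (u : Fin N → U) (a : U) (y : Fin N → Yc) (b : Yc) :
    ∑ i : Fin (N + 1), Λ ((Fin.snoc u a : Fin (N + 1) → U) i) (dec i (extSeq (Fin.snoc y b))) =
      ∑ i : Fin N, Λ (u i) (dec i (extSeq y)) + Λ a (dec N (extSeq (Fin.snoc y b))) := by
  have hpast (i : Fin N) : dec i (extSeq (Fin.snoc y b)) = dec i (extSeq y) :=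
    hdec i _ _ fun j hj => extSeq_snoc_of_lt _ _ (hj.trans_lt i.isLt)
  simp only [Fin.sum_univ_castSucc, Fin.snoc_castSucc, Fin.snoc_last, Fin.val_castSucc,
    Fin.val_last, hpast]

variable [Nonempty U] [Nonempty Yc] (PU : U → ℝ) (chan : Yc → Xc → ℝ)

/-- Joint probability of the source block `u` and the channel output block `y` under `enc`. -/
noncomputable def pathWeight (enc : ℕ → (ℕ → U) → (ℕ → Yc) → Xc) {N : ℕ}
    (u : Fin N → U) (y : Fin N → Yc) : ℝ :=
  (∏ i, PU (u i)) * ∏ i, chan (y i) (enc i (extSeq u) (extSeq y))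

variable {PU chan} {enc : ℕ → (ℕ → U) → (ℕ → Yc) → Xc}

lemma pathWeight_snoc (henc : IsCausalEncoder enc) {N : ℕ} (u : Fin N → U) (a : U)
    (y : Fin N → Yc) (b : Yc) :
    pathWeight PU chan enc (Fin.snoc u a : Fin (N + 1) → U) (Fin.snoc y b) =
      pathWeight PU chan enc u y * (PU a * chan b (enc N (extSeq (Fin.snoc u a)) (extSeq y))) := by
  have hpast (i : Fin N) :
      enc i (extSeq (Fin.snoc u a)) (extSeq (Fin.snoc y b)) = enc i (extSeq u) (extSeq y) :=
    henc i _ _ _ _ (fun j hj => extSeq_snoc_of_lt _ _ (hj.trans_lt i.isLt))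
      (fun j hj => extSeq_snoc_of_lt _ _ (hj.trans i.isLt))
  have hnow : enc N (extSeq (Fin.snoc u a)) (extSeq (Fin.snoc y b)) =
      enc N (extSeq (Fin.snoc u a)) (extSeq y) :=
    henc N _ _ _ _ (fun _ _ => rfl) (fun j hj => extSeq_snoc_of_lt _ _ hj)
  simp only [pathWeight, Fin.prod_univ_castSucc, Fin.snoc_castSucc, Fin.snoc_last,
    Fin.val_castSucc, Fin.val_last, hpast, hnow]
  ring

lemma pathWeight_nonneg (hPU0 : ∀ u, 0 ≤ PU u) (hch0 : ∀ y x, 0 ≤ chan y x) {N : ℕ}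
    (u : Fin N → U) (y : Fin N → Yc) : 0 ≤ pathWeight PU chan enc u y :=
  mul_nonneg (prod_nonneg fun _ _ => hPU0 _) (prod_nonneg fun _ _ => hch0 _ _)

variable [Fintype U] [Fintype Yc]

/-- Chain rule: summing out the last source letter and the last channel output. -/
lemma sum_pathWeight_succ_mul (henc : IsCausalEncoder enc) (N : ℕ)
    (G : (Fin (N + 1) → U) → (Fin (N + 1) → Yc) → ℝ) :
    ∑ u, ∑ y, pathWeight PU chan enc u y * G u y =
      ∑ u : Fin N → U, ∑ y : Fin N → Yc, pathWeight PU chan enc u y *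
        ∑ a, ∑ b, PU a * chan b (enc N (extSeq (Fin.snoc u a)) (extSeq y)) *
          G (Fin.snoc u a) (Fin.snoc y b) := by
  simp only [Fin.sum_univ_snoc (n := N), pathWeight_snoc henc, mul_sum, mul_assoc]
  rw [sum_comm]
  exact sum_congr rfl fun u _ => (sum_congr rfl fun a _ => sum_comm).trans sum_comm

lemma sum_pathWeight (hPUs : ∑ u, PU u = 1) (hchs : ∀ x, ∑ y, chan y x = 1)
    (henc : IsCausalEncoder enc) (N : ℕ) :
    ∑ u : Fin N → U, ∑ y : Fin N → Yc, pathWeight PU chan enc u y = 1 := by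
  induction N with
  | zero => simp [pathWeight]
  | succ N ih =>
    simpa only [mul_one, sum_sum_mul_chan_eq_one hPUs hchs, ih] using
      sum_pathWeight_succ_mul (PU := PU) (chan := chan) henc N fun _ _ => 1

lemma le_sum_pathWeight_mul (hPU0 : ∀ u, 0 ≤ PU u) (hPUs : ∑ u, PU u = 1)
    (hch0 : ∀ y x, 0 ≤ chan y x) (hchs : ∀ x, ∑ y, chan y x = 1) (henc : IsCausalEncoder enc)
    {N : ℕ} {f : (Fin N → U) → (Fin N → Yc) → ℝ} {a : ℝ} (ha : ∀ u y, a ≤ f u y) :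
    a ≤ ∑ u, ∑ y, pathWeight PU chan enc u y * f u y :=
  calc a = ∑ u, ∑ y, pathWeight PU chan enc u y * a := by
        simp only [← sum_mul, sum_pathWeight hPUs hchs henc, one_mul]
    _ ≤ _ := by
        gcongr with u _ y _
        · exact pathWeight_nonneg hPU0 hch0 u y
        · exact ha u y

lemma sum_pathWeight_mul_le (hPU0 : ∀ u, 0 ≤ PU u) (hPUs : ∑ u, PU u = 1)
    (hch0 : ∀ y x, 0 ≤ chan y x) (hchs : ∀ x, ∑ y, chan y x = 1) (henc : IsCausalEncoder enc)
    {N : ℕ} {f : (Fin N → U) → (Fin N → Yc) → ℝ} {b : ℝ} (hb : ∀ u y, f u y ≤ b) :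
    ∑ u, ∑ y, pathWeight PU chan enc u y * f u y ≤ b :=
  calc _ ≤ ∑ u, ∑ y, pathWeight PU chan enc u y * b := by
        gcongr with u _ y _
        · exact pathWeight_nonneg hPU0 hch0 u y
        · exact hb u y
    _ = b := by simp only [← sum_mul, sum_pathWeight hPUs hchs henc, one_mul]

noncomputable def expectedDistortion (PU : U → ℝ) (chan : Yc → Xc → ℝ) (Λ : U → Uh → ℝ)
    (enc : ℕ → (ℕ → U) → (ℕ → Yc) → Xc) (dec : ℕ → (ℕ → Yc) → Uh) (N : ℕ) : ℝ :=
  ∑ u : Fin N → U, ∑ y : Fin N → Yc,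
    pathWeight PU chan enc u y * ∑ i, Λ (u i) (dec i (extSeq y))

variable {Λ : U → Uh → ℝ} {dec : ℕ → (ℕ → Yc) → Uh}

lemma expectedDistortion_succ (hPUs : ∑ u, PU u = 1) (hchs : ∀ x, ∑ y, chan y x = 1)
    (henc : IsCausalEncoder enc) (hdec : IsCausalDecoder dec) (N : ℕ) :
    expectedDistortion PU chan Λ enc dec (N + 1) =
      expectedDistortion PU chan Λ enc dec N +
        ∑ u : Fin N → U, ∑ y : Fin N → Yc, pathWeight PU chan enc u y *
          singleLetterDistortion PU chan Λ (fun a => enc N (extSeq (Fin.snoc u a)) (extSeq y))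
            (fun b => dec N (extSeq (Fin.snoc y b))) := by
  unfold expectedDistortion
  rw [sum_pathWeight_succ_mul henc]
  simp only [sum_distortion_snoc hdec, mul_add, sum_add_distrib, ← sum_mul,
    sum_sum_mul_chan_eq_one hPUs hchs, one_mul]
  rfl

lemma natCast_mul_le_expectedDistortion (hPU0 : ∀ u, 0 ≤ PU u) (hPUs : ∑ u, PU u = 1)
    (hch0 : ∀ y x, 0 ≤ chan y x) (hchs : ∀ x, ∑ y, chan y x = 1) (henc : IsCausalEncoder enc)
    (hdec : IsCausalDecoder dec) {a : ℝ} (ha : ∀ X V, a ≤ singleLetterDistortion PU chan Λ X V)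
    (N : ℕ) : N * a ≤ expectedDistortion PU chan Λ enc dec N := by
  induction N with
  | zero => simp [expectedDistortion]
  | succ N ih =>
    rw [expectedDistortion_succ hPUs hchs henc hdec, Nat.cast_succ, add_one_mul]
    exact add_le_add ih (le_sum_pathWeight_mul hPU0 hPUs hch0 hchs henc fun _ _ => ha _ _)

lemma expectedDistortion_le_natCast_mul (hPU0 : ∀ u, 0 ≤ PU u) (hPUs : ∑ u, PU u = 1)
    (hch0 : ∀ y x, 0 ≤ chan y x) (hchs : ∀ x, ∑ y, chan y x = 1) (henc : IsCausalEncoder enc)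
    (hdec : IsCausalDecoder dec) {b : ℝ} (hb : ∀ X V, singleLetterDistortion PU chan Λ X V ≤ b)
    (N : ℕ) : expectedDistortion PU chan Λ enc dec N ≤ N * b := by
  induction N with
  | zero => simp [expectedDistortion]
  | succ N ih =>
    rw [expectedDistortion_succ hPUs hchs henc hdec, Nat.cast_succ, add_one_mul]
    exact add_le_add ih (sum_pathWeight_mul_le hPU0 hPUs hch0 hchs henc fun _ _ => hb _ _)

lemma expectedDistortion_memoryless (hPUs : ∑ u, PU u = 1) (hchs : ∀ x, ∑ y, chan y x = 1)
    (X : U → Xc) (V : Yc → Uh) (N : ℕ) :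
    expectedDistortion PU chan Λ (memorylessEncoder X) (memorylessDecoder V) N =
      N * singleLetterDistortion PU chan Λ X V := by
  have henc := isCausalEncoder_memorylessEncoder (Yc := Yc) X
  induction N with
  | zero => simp [expectedDistortion]
  | succ N ih =>
    rw [expectedDistortion_succ hPUs hchs henc (isCausalDecoder_memorylessDecoder V), ih]
    simp only [memorylessEncoder, memorylessDecoder, extSeq_snoc_last, ← sum_mul,
      sum_pathWeight hPUs hchs henc]
    push_cast
    ring

end Scheme

theorem stmt4_general {U Xc Yc Uh : Type*}
    [Fintype U] [Nonempty U] [DecidableEq U]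
    [Fintype Xc] [Nonempty Xc]
    [Fintype Yc] [Nonempty Yc] [DecidableEq Yc]
    [Fintype Uh] [Nonempty Uh]
    (PU : U → ℝ) (hPU0 : ∀ u, 0 ≤ PU u) (hPUs : ∑ u, PU u = 1)
    (chan : Yc → Xc → ℝ) (hch0 : ∀ y x, 0 ≤ chan y x) (hchs : ∀ x, ∑ y, chan y x = 1)
    (Λ : U → Uh → ℝ) (Λmax : ℝ) (hΛmax : ∀ u v, Λ u v ≤ Λmax) :
    sInf {r : ℝ | ∃ (enc : ℕ → (ℕ → U) → (ℕ → Yc) → Xc) (dec : ℕ → (ℕ → Yc) → Uh),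
        (∀ (i : ℕ) (u u' : ℕ → U) (y y' : ℕ → Yc),
            (∀ j ≤ i, u j = u' j) → (∀ j < i, y j = y' j) → enc i u y = enc i u' y') ∧
        (∀ (i : ℕ) (y y' : ℕ → Yc), (∀ j ≤ i, y j = y' j) → dec i y = dec i y') ∧
        r = Filter.limsup (fun N : ℕ =>
          (∑ u : Fin N → U, ∑ y : Fin N → Yc,
            ((∏ i, PU (u i)) * ∏ i, chan (y i) (enc i (extSeq u) (extSeq y))) *
              ∑ i, Λ (u i) (dec i (extSeq y))) / (N : ℝ)) Filter.atTop} =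
      Finset.univ.inf' Finset.univ_nonempty
        (fun c : (U → Xc) × (Yc → Uh) =>
          ∑ u, ∑ y, PU u * chan y (c.1 u) * Λ u (c.2 y)) := by
  obtain ⟨⟨X, V⟩, -, hXV⟩ := exists_mem_eq_inf' univ_nonempty
    fun c : (U → Xc) × (Yc → Uh) => singleLetterDistortion PU chan Λ c.1 c.2
  refine IsLeast.csInf_eq ⟨?_, ?_⟩
  · refine ⟨memorylessEncoder X, memorylessDecoder V, isCausalEncoder_memorylessEncoder X,
      isCausalDecoder_memorylessDecoder V, ?_⟩
    have hlim := limsup_natCast_mul_div (singleLetterDistortion PU chan Λ X V)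
    simp only [← expectedDistortion_memoryless hPUs hchs X V] at hlim
    exact hXV.trans hlim.symm
  · rintro r ⟨enc, dec, henc, hdec, rfl⟩
    exact le_limsup_div_natCast (f := expectedDistortion PU chan Λ enc dec)
      (natCast_mul_le_expectedDistortion hPU0 hPUs hch0 hchs henc hdec
        fun X V => inf'_le _ (mem_univ (X, V)))
      (expectedDistortion_le_natCast_mul hPU0 hPUs hch0 hchs henc hdec
        (singleLetterDistortion_le hPU0 hPUs hch0 hchs hΛmax))

/-- for a memoryless source and memoryless channel with zero lookahead
(`d = 0`), the infimum over all causal encoder sequences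
`f_{e,i} : 𝒰^i × 𝒴^{i−1} → 𝒳` and causal decoder sequences `f_{d,i} : 𝒴^i → 𝒰̂`
(causality expressed as dependence only on the corresponding prefixes) of the limsup
expected average distortion equals the best single-letter (symbol-by-symbol)
distortion `D_symbol = min_{X : 𝒰 → 𝒳, Û : 𝒴 → 𝒰̂} E[Λ(U, Û(Y))]`. -/
theorem stmt4 {U Xc Yc Uh : Type*}
    [Fintype U] [Nonempty U] [DecidableEq U]
    [Fintype Xc] [Nonempty Xc]
    [Fintype Yc] [Nonempty Yc] [DecidableEq Yc]
    [Fintype Uh] [Nonempty Uh]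
    (PU : U → ℝ) (hPU0 : ∀ u, 0 ≤ PU u) (hPUs : ∑ u, PU u = 1)
    (chan : Yc → Xc → ℝ) (hch0 : ∀ y x, 0 ≤ chan y x) (hchs : ∀ x, ∑ y, chan y x = 1)
    (Λ : U → Uh → ℝ) (Λmax : ℝ) (hΛ0 : ∀ u v, 0 ≤ Λ u v) (hΛmax : ∀ u v, Λ u v ≤ Λmax) :
    sInf {r : ℝ | ∃ (enc : ℕ → (ℕ → U) → (ℕ → Yc) → Xc) (dec : ℕ → (ℕ → Yc) → Uh),
        (∀ (i : ℕ) (u u' : ℕ → U) (y y' : ℕ → Yc),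
            (∀ j ≤ i, u j = u' j) → (∀ j < i, y j = y' j) → enc i u y = enc i u' y') ∧
        (∀ (i : ℕ) (y y' : ℕ → Yc), (∀ j ≤ i, y j = y' j) → dec i y = dec i y') ∧
        r = Filter.limsup (fun N : ℕ =>
          (∑ u : Fin N → U, ∑ y : Fin N → Yc,
            ((∏ i, PU (u i)) * ∏ i, chan (y i) (enc i (extSeq u) (extSeq y))) *
              ∑ i, Λ (u i) (dec i (extSeq y))) / (N : ℝ)) Filter.atTop} =
      Finset.univ.inf' Finset.univ_nonempty
        (fun c : (U → Xc) × (Yc → Uh) =>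
          ∑ u, ∑ y, PU u * chan y (c.1 u) * Λ u (c.2 y)) :=
  stmt4_general PU hPU0 hPUs chan hch0 hchs Λ Λmax hΛmax
end

section
/- (Verification theorem / ACOE, finite case.) Let 𝒮 and 𝒜 be finite nonempty sets, g : 𝒮 × 𝒜 → ℝ a bounded reward, and Q(·|s,a) a transition pmf on 𝒮 for each (s,a). Suppose λ ∈ ℝ and h : 𝒮 → ℝ satisfy λ + h(s) = max_{a∈𝒜} [ g(s,a) + Σ_{s'} Q(s'|s,a) h(s') ] for all s ∈ 𝒮. Then for every initial state s₀ and every (possibly history-dependent) policy choosing actions a_t as a function of the history, liminf_{N→∞} (1/N) E[Σ_{t=1}^N g(S_{t−1}, A_t)] ≤ λ. -/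
/-!
Given a supersolution `λ + h s ≥ g s a + ∑ s', Q s a s' h s'` of the optimality equation, the
function `N λ + h s - min h` dominates the expected `N`-step reward of every policy from every
history, by induction on `N`: one step of the chain adds at most `λ` to it. Dividing by `N`, the
average reward is at most `λ + O(1/N)`; since rewards are bounded below, the liminf is finite
and so at most `λ`.
-/

/-- Expected total reward over `N` steps of a controlled Markov chain with transition
pmf `Q`, one-stage reward `g`, and a history-dependent (deterministic) policy `π`
mapping the history of visited states `(s₀, …, s_{t−1})` to the action `a_t`.
The first `List S` argument is the history of states strictly before the current one. -/
noncomputable def expTotalReward {S A : Type*} [Fintype S]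
    (Q : S → A → S → ℝ) (g : S → A → ℝ) (π : List S → A) :
    ℕ → List S → S → ℝ
  | 0, _, _ => 0
  | N + 1, hist, s =>
      g s (π (hist ++ [s])) +
        ∑ s', Q s (π (hist ++ [s])) s' * expTotalReward Q g π N (hist ++ [s]) s'

open Filter Topology

section Expectation

variable {S : Type*} [Fintype S] {q f f' : S → ℝ}

lemma sum_mul_le_sum_mul_of_le (hq : ∀ s, 0 ≤ q s) (hf : ∀ s, f s ≤ f' s) :
    ∑ s, q s * f s ≤ ∑ s, q s * f' s :=
  Finset.sum_le_sum fun s _ => mul_le_mul_of_nonneg_left (hf s) (hq s)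

lemma sum_mul_const_add (hq : ∑ s, q s = 1) (c : ℝ) :
    ∑ s, q s * (c + f s) = c + ∑ s, q s * f s := by
  simp only [mul_add, Finset.sum_add_distrib, ← Finset.sum_mul, hq, one_mul]

end Expectation

section TotalReward

variable {S A : Type*} [Fintype S] {Q : S → A → S → ℝ} {g : S → A → ℝ}

theorem expTotalReward_le_of_supersolution (hQ0 : ∀ s a s', 0 ≤ Q s a s')
    (hQs : ∀ s a, ∑ s', Q s a s' = 1) {lam m : ℝ} {h : S → ℝ}
    (hsuper : ∀ s a, g s a + ∑ s', Q s a s' * h s' ≤ lam + h s) (hm : ∀ s, m ≤ h s)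
    (π : List S → A) (N : ℕ) (hist : List S) (s : S) :
    expTotalReward Q g π N hist s ≤ N * lam - m + h s := by
  induction N generalizing hist s with
  | zero => simpa [expTotalReward] using hm s
  | succ N ih =>
    set a := π (hist ++ [s])
    have hstep : ∑ s', Q s a s' * expTotalReward Q g π N (hist ++ [s]) s' ≤
        N * lam - m + ∑ s', Q s a s' * h s' := by
      rw [← sum_mul_const_add (hQs s a)]
      exact sum_mul_le_sum_mul_of_le (hQ0 s a) fun s' => ih _ s'
    rw [expTotalReward]
    push_cast
    linarith [hsuper s a]

theorem mul_le_expTotalReward (hQ0 : ∀ s a s', 0 ≤ Q s a s')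
    (hQs : ∀ s a, ∑ s', Q s a s' = 1) {c : ℝ} (hg : ∀ s a, c ≤ g s a)
    (π : List S → A) (N : ℕ) (hist : List S) (s : S) :
    N * c ≤ expTotalReward Q g π N hist s := by
  induction N generalizing hist s with
  | zero => simp [expTotalReward]
  | succ N ih =>
    set a := π (hist ++ [s])
    have hstep : N * c ≤ ∑ s', Q s a s' * expTotalReward Q g π N (hist ++ [s]) s' :=
      calc (N : ℝ) * c = ∑ s', Q s a s' * (N * c) := by rw [← Finset.sum_mul, hQs, one_mul]
        _ ≤ _ := sum_mul_le_sum_mul_of_le (hQ0 s a) fun s' => ih _ s'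
    rw [expTotalReward]
    push_cast
    linarith [hg s a]

end TotalReward

theorem liminf_div_le_of_le_mul_add {E : ℕ → ℝ} {c lam C : ℝ}
    (hlow : ∀ N, N * c ≤ E N) (hup : ∀ N, E N ≤ N * lam + C) :
    liminf (fun N : ℕ => E N / N) atTop ≤ lam := by
  have hbound (N : ℕ) (hN : 1 ≤ N) : c ≤ E N / N ∧ E N / N ≤ lam + C / N := by
    have hN' : (0 : ℝ) < N := by exact_mod_cast hN
    rw [le_div_iff₀ hN', div_le_iff₀ hN', add_mul, div_mul_cancel₀ _ hN'.ne']
    exact ⟨by linarith [hlow N], by linarith [hup N]⟩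
  have hbdd : IsBoundedUnder (· ≥ ·) atTop (fun N : ℕ => E N / N) :=
    isBoundedUnder_of_eventually_ge <|
      (eventually_ge_atTop 1).mono fun N hN => (hbound N hN).1
  have hlim : Tendsto (fun N : ℕ => lam + C / N) atTop (𝓝 lam) := by
    simpa using (tendsto_const_div_atTop_nhds_zero_nat C).const_add lam
  refine liminf_le_of_le hbdd fun b hb => ge_of_tendsto hlim ?_
  filter_upwards [hb, eventually_ge_atTop 1] with N hbN hN
  exact hbN.trans (hbound N hN).2

theorem stmt7_general {S A : Type*} [Fintype S] [Fintype A] [Nonempty A]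
    (Q : S → A → S → ℝ) (hQ0 : ∀ s a s', 0 ≤ Q s a s') (hQs : ∀ s a, ∑ s', Q s a s' = 1)
    (g : S → A → ℝ) (lam : ℝ) (h : S → ℝ)
    (hACOE : ∀ s, lam + h s =
      Finset.univ.sup' Finset.univ_nonempty (fun a => g s a + ∑ s', Q s a s' * h s')) :
    ∀ (π : List S → A) (s₀ : S),
      Filter.liminf (fun N : ℕ => expTotalReward Q g π N [] s₀ / N) Filter.atTop ≤ lam := by
  intro π s₀
  have hsuper (s : S) (a : A) : g s a + ∑ s', Q s a s' * h s' ≤ lam + h s :=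
    (hACOE s).symm ▸ Finset.le_sup' (fun a => g s a + ∑ s', Q s a s' * h s') (Finset.mem_univ a)
  obtain ⟨m, hm⟩ := Finite.bddBelow_range h
  obtain ⟨c, hc⟩ := Finite.bddBelow_range (fun p : S × A => g p.1 p.2)
  refine liminf_div_le_of_le_mul_add (c := c) (C := h s₀ - m)
    (fun N => mul_le_expTotalReward hQ0 hQs (fun s a => hc ⟨(s, a), rfl⟩) π N [] s₀)
    (fun N => ?_)
  have := expTotalReward_le_of_supersolution hQ0 hQs hsuper (fun s => hm ⟨s, rfl⟩) π N [] s₀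
  linarith

/-- verification theorem / ACOE, finite case: if `λ` and `h` solve the
average cost optimality equation, then no policy (however history-dependent) can have
average reward exceeding `λ`, from any initial state. -/
theorem stmt7 {S A : Type*} [Fintype S] [Nonempty S] [Fintype A] [Nonempty A]
    (Q : S → A → S → ℝ) (hQ0 : ∀ s a s', 0 ≤ Q s a s') (hQs : ∀ s a, ∑ s', Q s a s' = 1)
    (g : S → A → ℝ) (lam : ℝ) (h : S → ℝ)
    (hACOE : ∀ s, lam + h s =
      Finset.univ.sup' Finset.univ_nonempty (fun a => g s a + ∑ s', Q s a s' * h s')) :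
    ∀ (π : List S → A) (s₀ : S),
      Filter.liminf (fun N : ℕ => expTotalReward Q g π N [] s₀ / N) Filter.atTop ≤ lam :=
  stmt7_general Q hQ0 hQs g lam h hACOE
end

section
/- (Verification theorem, achievability part.) Under the setting of the finite-state ACOE, if μ : 𝒮 → 𝒜 attains the maximum in λ + h(s) = max_a [g(s,a) + Σ_{s'} Q(s'|s,a) h(s')] for every s, then the stationary policy a_t = μ(S_{t−1}) achieves average reward exactly λ from any initial state: lim_{N→∞} (1/N) E[Σ_{t=1}^N g(S_{t−1}, μ(S_{t−1}))] = λ. -/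
/-!
Write `V N s` for the expected `N`-step reward of `μ` from `s`. Because `μ` attains the
maximum in the ACOE, the deviation `V N s - (N λ + h s)` is propagated by the transition
kernel of `μ` alone: its value at step `N + 1` is a `Q(·|s, μ s)`-average of its values at
step `N`. Averages do not increase the sup norm, and the deviation at `N = 0` is `-h`, so
`|V N s - N λ| ≤ 2 ‖h‖` for all `N`; dividing by `N` gives the limit `λ`.
-/

/-- Expected total reward over `N` steps under the stationary policy `μ` in a controlled
Markov chain with transition pmf `Q` and one-stage reward `g`. -/
noncomputable def expTotalRewardStat {S A : Type*} [Fintype S]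
    (Q : S → A → S → ℝ) (g : S → A → ℝ) (μ : S → A) : ℕ → S → ℝ
  | 0, _ => 0
  | N + 1, s =>
      g s (μ s) + ∑ s', Q s (μ s) s' * expTotalRewardStat Q g μ N s'

open Filter Topology

lemma abs_sum_mul_le_of_sum_eq_one {ι : Type*} [Fintype ι] {w f : ι → ℝ} {C : ℝ}
    (hw0 : ∀ i, 0 ≤ w i) (hw1 : ∑ i, w i = 1) (hf : ∀ i, |f i| ≤ C) :
    |∑ i, w i * f i| ≤ C :=
  calc |∑ i, w i * f i| ≤ ∑ i, |w i * f i| := Finset.abs_sum_le_sum_abs _ _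
    _ ≤ ∑ i, w i * C := Finset.sum_le_sum fun i _ => by
        rw [abs_mul, abs_of_nonneg (hw0 i)]
        exact mul_le_mul_of_nonneg_left (hf i) (hw0 i)
    _ = C := by rw [← Finset.sum_mul, hw1, one_mul]

lemma tendsto_div_natCast_of_abs_sub_mul_le {u : ℕ → ℝ} {lam C : ℝ}
    (hu : ∀ N : ℕ, |u N - N * lam| ≤ C) :
    Tendsto (fun N : ℕ => u N / N) atTop (𝓝 lam) := by
  have hdev : Tendsto (fun N : ℕ => (u N - N * lam) / N) atTop (𝓝 0) :=
    squeeze_zero_norm (fun N => by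
        rw [Real.norm_eq_abs, abs_div, Nat.abs_cast]
        exact div_le_div_of_nonneg_right (hu N) N.cast_nonneg)
      (tendsto_const_div_atTop_nhds_zero_nat C)
  rw [← add_zero lam]
  refine (hdev.const_add lam).congr' ?_
  filter_upwards [eventually_ne_atTop 0] with N hN
  field_simp
  ring

section ExpTotalRewardStat

variable {S A : Type*} [Fintype S] {Q : S → A → S → ℝ} {g : S → A → ℝ} {μ : S → A}
  {lam : ℝ} {h : S → ℝ}

lemma expTotalRewardStat_succ_sub
    (hQs : ∀ s a, ∑ s', Q s a s' = 1)
    (hμ : ∀ s, g s (μ s) + ∑ s', Q s (μ s) s' * h s' = lam + h s) (N : ℕ) (s : S) :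
    expTotalRewardStat Q g μ (N + 1) s - ((N + 1 : ℕ) * lam + h s) =
      ∑ s', Q s (μ s) s' * (expTotalRewardStat Q g μ N s' - (N * lam + h s')) := by
  simp only [expTotalRewardStat, Nat.cast_succ, mul_sub, mul_add, Finset.sum_sub_distrib,
    Finset.sum_add_distrib, ← Finset.sum_mul, hQs, one_mul]
  linarith [hμ s]

lemma abs_expTotalRewardStat_sub_le
    (hQ0 : ∀ s a s', 0 ≤ Q s a s') (hQs : ∀ s a, ∑ s', Q s a s' = 1)
    (hμ : ∀ s, g s (μ s) + ∑ s', Q s (μ s) s' * h s' = lam + h s) (N : ℕ) (s : S) :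
    |expTotalRewardStat Q g μ N s - (N * lam + h s)| ≤ ‖h‖ := by
  induction N generalizing s with
  | zero => simpa [expTotalRewardStat] using norm_le_pi_norm h s
  | succ N ih =>
    rw [expTotalRewardStat_succ_sub hQs hμ]
    exact abs_sum_mul_le_of_sum_eq_one (hQ0 s (μ s)) (hQs s (μ s)) ih

end ExpTotalRewardStat

theorem stmt8_general {S A : Type*} [Fintype S]
    (Q : S → A → S → ℝ) (hQ0 : ∀ s a s', 0 ≤ Q s a s') (hQs : ∀ s a, ∑ s', Q s a s' = 1)
    (g : S → A → ℝ) (lam : ℝ) (h : S → ℝ) (μ : S → A)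
    (hμ : ∀ s, g s (μ s) + ∑ s', Q s (μ s) s' * h s' = lam + h s) :
    ∀ s₀ : S,
      Filter.Tendsto (fun N : ℕ => expTotalRewardStat Q g μ N s₀ / N)
        Filter.atTop (nhds lam) := by
  intro s₀
  refine tendsto_div_natCast_of_abs_sub_mul_le (C := ‖h‖ + ‖h‖) fun N => ?_
  have hdev := abs_expTotalRewardStat_sub_le hQ0 hQs hμ N s₀
  have hh : |h s₀| ≤ ‖h‖ := norm_le_pi_norm h s₀
  calc |expTotalRewardStat Q g μ N s₀ - N * lam|
      = |(expTotalRewardStat Q g μ N s₀ - (N * lam + h s₀)) + h s₀| := by ring_nf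
    _ ≤ ‖h‖ + ‖h‖ := (abs_add_le _ _).trans (add_le_add hdev hh)

/-- verification theorem, achievability part: if `μ` attains the maximum
in the ACOE `λ + h(s) = max_a [g(s,a) + Σ_{s'} Q(s'|s,a) h(s')]` for every state, then
the stationary policy `a_t = μ(S_{t−1})` achieves average reward exactly `λ` from any
initial state. -/
theorem stmt8 {S A : Type*} [Fintype S] [Nonempty S] [Fintype A] [Nonempty A]
    (Q : S → A → S → ℝ) (hQ0 : ∀ s a s', 0 ≤ Q s a s') (hQs : ∀ s a, ∑ s', Q s a s' = 1)
    (g : S → A → ℝ) (lam : ℝ) (h : S → ℝ) (μ : S → A)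
    (hACOE : ∀ s, lam + h s =
      Finset.univ.sup' Finset.univ_nonempty (fun a => g s a + ∑ s', Q s a s' * h s'))
    (hμ : ∀ s, g s (μ s) + ∑ s', Q s (μ s) s' * h s' = lam + h s) :
    ∀ s₀ : S,
      Filter.Tendsto (fun N : ℕ => expTotalRewardStat Q g μ N s₀ / N)
        Filter.atTop (nhds lam) :=
  stmt8_general Q hQ0 hQs g lam h μ hμ
end
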